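/- Every LM-system R is free over its signature: for every n-ary function symbol f, if f(s1,…,sn) and f(t1,…,tn) are terms whose arguments are all in R-normal form and the two terms are joinable modulo R, then si = ti for all i (i.e., the two terms are syntactically equal). -/

import Mathlib

/-! Basic first-order terms, positions, substitutions and rewriting. -/

inductive Term (F : Type) : Type
  | var : Nat → Term F
  | app : F → List (Term F) → Term F

namespace Term

def subst {F : Type} (σ : Nat → Term F) : Term F → Term F
  | var n => σ n
  | app f ts => app f (ts.attach.map fun ⟨t, _⟩ => t.subst σ)

def root {F : Type} : Term F → Option F
  | var _ => none
  | app f _ => some f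

def label {F : Type} : Term F → F ⊕ Nat
  | var n => Sum.inr n
  | app f _ => Sum.inl f

def IsVar {F : Type} : Term F → Prop
  | var _ => True
  | app _ _ => False

def varsL {F : Type} : Term F → List Nat
  | var n => [n]
  | app _ ts => (ts.attach.map fun ⟨t, _⟩ => t.varsL).flatten

end Term

abbrev Rule (F : Type) := Term F × Term F
abbrev TRS (F : Type) := Set (Rule F)

/-- `SubtermAt t p u` : the subterm of `t` at position `p` is `u`. -/
inductive SubtermAt {F : Type} : Term F → List Nat → Term F → Prop
  | here (t : Term F) : SubtermAt t [] t
  | there {f : F} {ts : List (Term F)} {i : Nat} {u : Term F} {p : List Nat} {v : Term F} :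
      ts[i]? = some u → SubtermAt u p v → SubtermAt (Term.app f ts) (i :: p) v

/-- `ReplaceAt t p v t'` : replacing the subterm of `t` at position `p` by `v` yields `t'`. -/
inductive ReplaceAt {F : Type} : Term F → List Nat → Term F → Term F → Prop
  | here (t u : Term F) : ReplaceAt t [] u u
  | there {f : F} {ts : List (Term F)} {i : Nat} {u : Term F} {p : List Nat} {v w : Term F} :
      ts[i]? = some u → ReplaceAt u p v w →
      ReplaceAt (Term.app f ts) (i :: p) v (Term.app f (ts.set i w))

variable {F : Type}

/-- One rewrite step using the given rule (at some position, with some substitution). -/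
def RuleStep (ρ : Rule F) (s t : Term F) : Prop :=
  ∃ (σ : Nat → Term F) (p : List Nat),
    SubtermAt s p (ρ.1.subst σ) ∧ ReplaceAt s p (ρ.2.subst σ) t

def OneStep (R : TRS F) (s t : Term F) : Prop := ∃ ρ ∈ R, RuleStep ρ s t

/-- A rewrite step at the root position. -/
def RootStep (R : TRS F) (s t : Term F) : Prop :=
  ∃ ρ ∈ R, ∃ σ : Nat → Term F, s = ρ.1.subst σ ∧ t = ρ.2.subst σ

def StarRW (R : TRS F) : Term F → Term F → Prop := Relation.ReflTransGen (OneStep R)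
def Plus (R : TRS F) : Term F → Term F → Prop := Relation.TransGen (OneStep R)
/-- Convertibility (the congruence / equational theory generated by `R`). -/
def Conv (R : TRS F) : Term F → Term F → Prop := Relation.EqvGen (OneStep R)
def Joinable (R : TRS F) (s t : Term F) : Prop := ∃ u, StarRW R s u ∧ StarRW R t u
def NormalForm (R : TRS F) (t : Term F) : Prop := ∀ u, ¬ OneStep R t u
/-- `t` is the `R`-normal form of `s`. -/
def NFof (R : TRS F) (s t : Term F) : Prop := StarRW R s t ∧ NormalForm R t
def Terminating (R : TRS F) : Prop := WellFounded (fun a b : Term F => OneStep R b a)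
def Confluent (R : TRS F) : Prop := ∀ s t u, StarRW R s t → StarRW R s u → Joinable R t u
def Convergent (R : TRS F) : Prop := Confluent R ∧ Terminating R

/-- every proper subterm is irreducible -/
def EpsIrreducible (R : TRS F) (t : Term F) : Prop :=
  ∀ p u, SubtermAt t p u → p ≠ [] → NormalForm R u

def InnermostRedex (R : TRS F) (t : Term F) : Prop :=
  EpsIrreducible R t ∧ ¬ NormalForm R t

/-- Forward-closed, via the one-step-to-normal-form characterization. -/
def FCclosed (R : TRS F) : Prop :=
  ∀ t, InnermostRedex R t → ∀ u, NFof R t u → OneStep R t u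

def Unifies (σ : Nat → Term F) (s t : Term F) : Prop := s.subst σ = t.subst σ

def IsMGU (σ : Nat → Term F) (s t : Term F) : Prop :=
  Unifies σ s t ∧ ∀ τ, Unifies τ s t → ∃ δ, ∀ x, τ x = (σ x).subst δ

def IsRenaming (ρ : Nat → Term F) : Prop :=
  ∃ f : Nat → Nat, Function.Injective f ∧ ∀ n, ρ n = Term.var (f n)

/-- Redundancy criterion for an oriented equation `e` whose right-hand side is
reachable from its left-hand side: some proper subterm of the lhs is reducible. -/
def Redundant (R : TRS F) (e : Rule F) : Prop :=
  ∃ p u, p ≠ ([] : List Nat) ∧ SubtermAt e.1 p u ∧ ¬ NormalForm R u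

/-- `R₁ ↝ R₂`: forward overlaps of rules of `R₂` (renamed apart) into
right-hand sides of rules of `R₁`, at non-variable positions, via an mgu. -/
def FStep (R₁ R₂ : TRS F) : TRS F :=
  { e | ∃ (l₁ r₁ l₂ r₂ : Term F) (ρ : Nat → Term F) (p : List Nat) (u : Term F)
          (σ : Nat → Term F) (r₁' : Term F),
      (l₁, r₁) ∈ R₁ ∧ (l₂, r₂) ∈ R₂ ∧ IsRenaming ρ ∧
      SubtermAt r₁ p u ∧ ¬ u.IsVar ∧ IsMGU σ u (l₂.subst ρ) ∧
      ReplaceAt r₁ p (r₂.subst ρ) r₁' ∧ e = (l₁.subst σ, r₁'.subst σ) }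

def FCiter (R : TRS F) : Nat → TRS F
  | 0 => R
  | k + 1 => FCiter R k ∪ { e | e ∈ FStep (FCiter R k) R ∧ ¬ Redundant (FCiter R k) e }

def FCinf (R : TRS F) : TRS F := ⋃ k, FCiter R k

/-- Forward-closed, via the forward-closure construction: `FC(R) = R`. -/
def ForwardClosedFC (R : TRS F) : Prop := FCinf R = R

/-- `RHS(R)`: `R` together with the conclusions of right-hand-side critical
pair inferences (second rule renamed apart). -/
def RHSset (R : TRS F) : TRS F :=
  R ∪ { e | ∃ (s t u₀ v₀ : Term F) (ρ σ : Nat → Term F), (s, t) ∈ R ∧ (u₀, v₀) ∈ R ∧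
        IsRenaming ρ ∧ IsMGU σ t (v₀.subst ρ) ∧
        s.subst σ ≠ (u₀.subst ρ).subst σ ∧ e = (s.subst σ, (u₀.subst ρ).subst σ) }

/-- the (unordered) pairs of root symbols of two equations coincide -/
def RootPairSimilar (e₁ e₂ : Rule F) : Prop :=
  (e₁.1.root = e₂.1.root ∧ e₁.2.root = e₂.2.root) ∨
  (e₁.1.root = e₂.2.root ∧ e₁.2.root = e₂.1.root)

def QuasiDet (E : TRS F) : Prop :=
  (∀ e ∈ E, ¬ e.1.IsVar ∧ ¬ e.2.IsVar) ∧
  (∀ e ∈ E, e.1.root ≠ e.2.root) ∧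
  (∀ e₁ ∈ E, ∀ e₂ ∈ E, e₁ ≠ e₂ → ¬ RootPairSimilar e₁ e₂)

def HasRootPairRepetition (E : TRS F) : Prop :=
  ∃ e₁ ∈ E, ∃ e₂ ∈ E, e₁ ≠ e₂ ∧ RootPairSimilar e₁ e₂

def VarPreserving (R : TRS F) : Prop :=
  ∀ e ∈ R, ∀ n, n ∈ Term.varsL e.1 ↔ n ∈ Term.varsL e.2

def RightReduced (R : TRS F) : Prop := ∀ e ∈ R, NormalForm R e.2

def AlmostLeftReduced (R : TRS F) : Prop :=
  ¬ ∃ (l₁ r₁ l₂ r₂ : Term F) (p : List Nat) (u : Term F) (σ : Nat → Term F),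
      (l₁, r₁) ∈ R ∧ (l₂, r₂) ∈ R ∧ p ≠ [] ∧ SubtermAt l₁ p u ∧ u = l₂.subst σ

def NonSubtermCollapsing (R : TRS F) : Prop :=
  ¬ ∃ (t u : Term F) (p : List Nat), p ≠ [] ∧ SubtermAt u p t ∧ Conv R t u

structure LMSystem (R : TRS F) : Prop where
  convergent : Convergent R
  almostLeftReduced : AlmostLeftReduced R
  rightReduced : RightReduced R
  nonCollapsing : NonSubtermCollapsing R
  forwardClosed : FCclosed R
  quasiDet : QuasiDet (RHSset R)

/-- the symbol (function symbol or variable) of a term at a position, if defined -/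
def labelAt {F : Type} : List Nat → Term F → Option (F ⊕ Nat)
  | [], t => some t.label
  | i :: p, Term.app _ ts => (ts[i]?).bind (labelAt p)
  | _ :: _, Term.var _ => none

/-- outermost distinguishing position -/
def ODP (s t : Term F) (p : List Nat) : Prop :=
  (labelAt p s ≠ none ∨ labelAt p t ≠ none) ∧
  labelAt p s ≠ labelAt p t ∧
  ∀ q, q <+: p → q ≠ p → labelAt q s = labelAt q t


/-!
Because the arguments are normal forms, `f(s₁,…,sₙ)` and `f(t₁,…,tₙ)` are each either normal or
an innermost redex, and forward closure makes each of them reach the common normal form `w` in at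
most one step, necessarily at the root. Quasi-determinism of `RHS(R) ⊇ R` forbids a root step
between two terms with root `f`, and forces the two root steps to use the same rule `l → r`. The two
matching substitutions then agree on the variables of `r`, hence on those of `l`: a variable of `l`
missing from `r` could be instantiated by an instance of `l` itself, making that instance
convertible to a proper subterm of another one, against non-subterm-collapsingness.
-/

namespace Term

theorem subst_app (σ : Nat → Term F) (f : F) (ts : List (Term F)) :
    (app f ts).subst σ = app f (ts.map (·.subst σ)) := by
  rw [subst]
  congr 1
  simp

theorem root_subst {t : Term F} (ht : ¬ t.IsVar) (σ : Nat → Term F) :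
    (t.subst σ).root = t.root := by
  cases t with
  | var n => exact absurd trivial ht
  | app f ts => rw [subst_app]; rfl

theorem mem_varsL_app {f : F} {ts : List (Term F)} {x : Nat} :
    x ∈ (app f ts).varsL ↔ ∃ u ∈ ts, x ∈ u.varsL := by
  simp only [varsL, List.mem_flatten, List.mem_map, List.mem_attach, true_and, Subtype.exists]
  constructor
  · rintro ⟨_, ⟨u, hu, rfl⟩, hx⟩
    exact ⟨u, hu, hx⟩
  · rintro ⟨u, hu, hx⟩
    exact ⟨_, ⟨u, hu, rfl⟩, hx⟩

theorem subst_congr : ∀ {t : Term F} {σ₁ σ₂ : Nat → Term F},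
    (∀ x ∈ t.varsL, σ₁ x = σ₂ x) → t.subst σ₁ = t.subst σ₂
  | var n, _, _, h => by simpa [subst] using h n (by simp [varsL])
  | app f ts, _, _, h => by
      rw [subst_app, subst_app]
      congr 1
      refine List.map_congr_left fun u hu => subst_congr fun x hx => h x ?_
      exact mem_varsL_app.2 ⟨u, hu, hx⟩
termination_by t => sizeOf t
decreasing_by
  have := List.sizeOf_lt_of_mem hu
  simp only [app.sizeOf_spec]
  omega

end Term

theorem SubtermAt.unique {t : Term F} {p : List Nat} {u v : Term F}
    (hu : SubtermAt t p u) (hv : SubtermAt t p v) : u = v := by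
  induction hu with
  | here => cases hv; rfl
  | there hget _ ih =>
    cases hv with
    | there hget' hsub' =>
      rw [hget] at hget'
      cases hget'
      exact ih hsub'

theorem SubtermAt.eq_of_nil {t u : Term F} (h : SubtermAt t [] u) : t = u := by
  cases h; rfl

theorem ReplaceAt.eq_of_nil {t v w : Term F} (h : ReplaceAt t [] v w) : w = v := by
  cases h; rfl

theorem SubtermAt.subst {t : Term F} {p : List Nat} {u : Term F} (h : SubtermAt t p u)
    (σ : Nat → Term F) : SubtermAt (t.subst σ) p (u.subst σ) := by
  induction h with
  | here => exact .here _
  | there hget _ ih =>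
    rw [Term.subst_app]
    exact .there (by rw [List.getElem?_map, hget]; rfl) ih

theorem SubtermAt.trans {t u v : Term F} {p q : List Nat}
    (h₁ : SubtermAt t p u) (h₂ : SubtermAt u q v) : SubtermAt t (p ++ q) v := by
  induction h₁ with
  | here => exact h₂
  | there hget _ ih => exact .there hget (ih h₂)

theorem SubtermAt.exists_replaceAt {t u v w : Term F} {p q : List Nat}
    (h : SubtermAt t p u) (hr : ReplaceAt u q v w) : ∃ t', ReplaceAt t (p ++ q) v t' := by
  induction h with
  | here => exact ⟨w, hr⟩
  | there hget _ ih =>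
    obtain ⟨t', ht'⟩ := ih hr
    exact ⟨_, .there hget ht'⟩

namespace Term

theorem exists_subtermAt_of_mem_varsL : ∀ {t : Term F} {x : Nat}, x ∈ t.varsL →
    ∃ p, SubtermAt t p (var x)
  | var n, x, h => by
      simp only [varsL, List.mem_singleton] at h
      exact h ▸ ⟨[], .here _⟩
  | app f ts, x, h => by
      obtain ⟨u, hu, hx⟩ := mem_varsL_app.1 h
      obtain ⟨p, hp⟩ := exists_subtermAt_of_mem_varsL hx
      obtain ⟨i, hi⟩ := List.getElem?_of_mem hu
      exact ⟨i :: p, .there hi hp⟩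
termination_by t => sizeOf t
decreasing_by
  have := List.sizeOf_lt_of_mem hu
  simp only [app.sizeOf_spec]
  omega

theorem subst_eq_subst_iff {t : Term F} {σ₁ σ₂ : Nat → Term F} :
    t.subst σ₁ = t.subst σ₂ ↔ ∀ x ∈ t.varsL, σ₁ x = σ₂ x := by
  refine ⟨fun h x hx => ?_, subst_congr⟩
  obtain ⟨p, hp⟩ := exists_subtermAt_of_mem_varsL hx
  have h₁ := hp.subst σ₁
  rw [h] at h₁
  simpa [subst] using h₁.unique (hp.subst σ₂)

end Term

open Term

section Rewriting

variable {R : TRS F}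

theorem OneStep.exists_of_subtermAt {t u v : Term F} {p : List Nat} (h : SubtermAt t p u)
    (hu : OneStep R u v) : ∃ t', OneStep R t t' := by
  obtain ⟨ρ, hρ, σ, q, hsub, hrep⟩ := hu
  obtain ⟨t', ht'⟩ := h.exists_replaceAt hrep
  exact ⟨t', ρ, hρ, σ, p ++ q, h.trans hsub, ht'⟩

theorem NormalForm.subtermAt {t u : Term F} {p : List Nat} (ht : NormalForm R t)
    (h : SubtermAt t p u) : NormalForm R u := fun _ hu =>
  let ⟨t', ht'⟩ := OneStep.exists_of_subtermAt h hu
  ht t' ht'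

theorem NormalForm.eq_of_starRW {s t : Term F} (hs : NormalForm R s) (h : StarRW R s t) :
    s = t :=
  ((Relation.reflTransGen_iff_eq fun u hu => hs u hu).1 h).symm

theorem RootStep.oneStep {s t : Term F} (h : RootStep R s t) : OneStep R s t := by
  obtain ⟨ρ, hρ, σ, rfl, rfl⟩ := h
  exact ⟨ρ, hρ, σ, [], .here _, .here _ _⟩

theorem Terminating.exists_nfof (hR : Terminating R) (t : Term F) : ∃ w, NFof R t w := by
  induction t using hR.induction with
  | _ t ih =>
    by_cases ht : NormalForm R t
    · exact ⟨t, .refl, ht⟩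
    · obtain ⟨u, hu⟩ := not_forall_not.1 ht
      obtain ⟨w, huw, hw⟩ := ih u hu
      exact ⟨w, .head hu huw, hw⟩

theorem Joinable.exists_nfof (hR : Terminating R) {s t : Term F} (h : Joinable R s t) :
    ∃ w, NFof R s w ∧ NFof R t w := by
  obtain ⟨u, hsu, htu⟩ := h
  obtain ⟨w, huw, hw⟩ := hR.exists_nfof u
  exact ⟨w, ⟨hsu.trans huw, hw⟩, ⟨htu.trans huw, hw⟩⟩

theorem epsIrreducible_app {f : F} {ts : List (Term F)} (h : ∀ u ∈ ts, NormalForm R u) :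
    EpsIrreducible R (app f ts) := by
  rintro p u (_ | ⟨hget, hsub⟩) hp
  · exact absurd rfl hp
  · exact (h _ (List.mem_of_getElem? hget)).subtermAt hsub

theorem EpsIrreducible.rootStep_of_oneStep {t u : Term F} (ht : EpsIrreducible R t)
    (h : OneStep R t u) : RootStep R t u := by
  obtain ⟨ρ, hρ, σ, p, hsub, hrep⟩ := h
  rcases eq_or_ne p [] with rfl | hp
  · exact ⟨ρ, hρ, σ, hsub.eq_of_nil, hrep.eq_of_nil⟩
  · exact absurd ⟨ρ, hρ, σ, [], .here _, .here _ _⟩ (ht p _ hsub hp _)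

theorem FCclosed.eq_or_rootStep_of_nfof (hR : FCclosed R) {t w : Term F}
    (ht : EpsIrreducible R t) (h : NFof R t w) : t = w ∨ RootStep R t w := by
  by_cases htn : NormalForm R t
  · exact .inl (htn.eq_of_starRW h.1)
  · exact .inr (ht.rootStep_of_oneStep (hR t ⟨ht, htn⟩ w h))

theorem NonSubtermCollapsing.mem_varsL_of_mem_varsL_lhs (hR : NonSubtermCollapsing R)
    {l r : Term F} (hρ : (l, r) ∈ R) (hl : ¬ l.IsVar) {x : Nat} (hx : x ∈ l.varsL) :
    x ∈ r.varsL := by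
  by_contra hxr
  obtain ⟨p, hp⟩ := exists_subtermAt_of_mem_varsL hx
  have hp₀ : p ≠ [] := by
    rintro rfl
    cases hp
    exact hl trivial
  -- `u = l[var] → r[var] = r[x := u] ← l[x := u]`, and `u` sits at `p` in `l[x := u]`
  let u := l.subst Term.var
  let τ := Function.update Term.var x u
  have hrτ : r.subst τ = r.subst Term.var :=
    subst_congr fun y hy => Function.update_of_ne (ne_of_mem_of_not_mem hy hxr) _ _
  have hlτ : SubtermAt (l.subst τ) p u := by
    simpa [Term.subst, τ] using hp.subst τ
  refine hR ⟨_, _, p, hp₀, hlτ, ?_⟩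
  refine .trans _ _ _ (.rel _ _ (RootStep.oneStep ⟨(l, r), hρ, Term.var, rfl, rfl⟩)) ?_
  rw [← hrτ]
  exact .symm _ _ (.rel _ _ (RootStep.oneStep ⟨(l, r), hρ, τ, rfl, rfl⟩))

end Rewriting

section QuasiDet

variable {E : TRS F}

theorem QuasiDet.subset {E' : TRS F} (hE : QuasiDet E) (h : E' ⊆ E) : QuasiDet E' :=
  ⟨fun e he => hE.1 e (h he), fun e he => hE.2.1 e (h he),
    fun e₁ he₁ e₂ he₂ => hE.2.2 e₁ (h he₁) e₂ (h he₂)⟩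

theorem QuasiDet.eq_of_root_eq (hE : QuasiDet E) {e₁ e₂ : Rule F} (he₁ : e₁ ∈ E) (he₂ : e₂ ∈ E)
    (hl : e₁.1.root = e₂.1.root) (hr : e₁.2.root = e₂.2.root) : e₁ = e₂ := by
  by_contra hne
  exact hE.2.2 e₁ he₁ e₂ he₂ hne (.inl ⟨hl, hr⟩)

theorem QuasiDet.root_ne_of_rootStep (hE : QuasiDet E) {s t : Term F} (h : RootStep E s t) :
    s.root ≠ t.root := by
  obtain ⟨ρ, hρ, σ, rfl, rfl⟩ := h
  rw [root_subst (hE.1 ρ hρ).1, root_subst (hE.1 ρ hρ).2]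
  exact hE.2.1 ρ hρ

end QuasiDet

theorem LMSystem.quasiDet_self {R : TRS F} (hR : LMSystem R) : QuasiDet R :=
  hR.quasiDet.subset Set.subset_union_left

theorem LMSystem.eq_of_rootStep_of_rootStep {R : TRS F} (hR : LMSystem R) {s t w : Term F}
    (hs : RootStep R s w) (ht : RootStep R t w) (hst : s.root = t.root) : s = t := by
  obtain ⟨⟨l, r⟩, hρ, σ, rfl, rfl⟩ := hs
  obtain ⟨⟨l', r'⟩, hρ', σ', rfl, hw⟩ := ht
  have hE := hR.quasiDet_self
  obtain ⟨hl, hr⟩ := hE.1 _ hρ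
  obtain ⟨hl', hr'⟩ := hE.1 _ hρ'
  obtain ⟨rfl, rfl⟩ : l = l' ∧ r = r' := Prod.ext_iff.1 <| hE.eq_of_root_eq hρ hρ'
    (by rwa [← root_subst hl σ, ← root_subst hl' σ'])
    (by rw [← root_subst hr σ, ← root_subst hr' σ', hw])
  exact subst_eq_subst_iff.2 fun x hx =>
    subst_eq_subst_iff.1 hw x (hR.nonCollapsing.mem_varsL_of_mem_varsL_lhs hρ hl hx)

theorem lm_free_over_signature_general {F : Type} (R : TRS F) (hlm : LMSystem R)
    (f : F) (ss ts : List (Term F))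
    (hss : ∀ u ∈ ss, NormalForm R u) (hts : ∀ u ∈ ts, NormalForm R u)
    (hj : Joinable R (Term.app f ss) (Term.app f ts)) :
    ss = ts := by
  obtain ⟨w, hsw, htw⟩ := hj.exists_nfof hlm.convergent.2
  have hs := hlm.forwardClosed.eq_or_rootStep_of_nfof (epsIrreducible_app hss) hsw
  have ht := hlm.forwardClosed.eq_or_rootStep_of_nfof (epsIrreducible_app hts) htw
  suffices Term.app f ss = Term.app f ts from (Term.app.inj this).2
  rcases hs with hs | hs <;> rcases ht with ht | ht
  · exact hs.trans ht.symm
  · exact absurd (by rw [← hs]; rfl) (hlm.quasiDet_self.root_ne_of_rootStep ht)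
  · exact absurd (by rw [← ht]; rfl) (hlm.quasiDet_self.root_ne_of_rootStep hs)
  · exact hlm.eq_of_rootStep_of_rootStep hs ht rfl

/-- every LM-system is free over its signature: joinable terms
`f(s₁,…,sₙ)` and `f(t₁,…,tₙ)` with all arguments in normal form are equal. -/
theorem lm_free_over_signature {F : Type} (R : TRS F) (hlm : LMSystem R)
    (f : F) (ss ts : List (Term F)) (hlen : ss.length = ts.length)
    (hss : ∀ u ∈ ss, NormalForm R u) (hts : ∀ u ∈ ts, NormalForm R u)
    (hj : Joinable R (Term.app f ss) (Term.app f ts)) :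
    ss = ts :=
  lm_free_over_signature_general R hlm f ss ts hss hts hj
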